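/- For every q ∈ (0,1) and every γ ∈ [0,1], the set G⁺_γ(q) := {ψ ∈ 𝓗 : D⁺_{μ_ψ}(q) ≥ γ} is a Gδ subset of 𝓗 (a countable intersection of open sets). -/

import Mathlib

open MeasureTheory Filter Set Topology ENNReal

noncomputable section

/-- `I_μ(q, ε) = ∫ μ(B(x,ε))^{q-1} dμ(x)`, integrated over `{x : μ(B(x,ε)) > 0}`. -/
def fracIntegral (μ : Measure ℝ) (q ε : ℝ) : ℝ≥0∞ :=
  ∫⁻ x in {x : ℝ | 0 < μ (Ioo (x - ε) (x + ε))}, μ (Ioo (x - ε) (x + ε)) ^ (q - 1) ∂μ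

/-- lower q-generalized fractal dimension. -/
def Dlower (μ : Measure ℝ) (q : ℝ) : ℝ :=
  liminf (fun ε : ℝ => Real.log (fracIntegral μ q ε).toReal / ((q - 1) * Real.log ε)) (𝓝[>] 0)

/-- upper q-generalized fractal dimension. -/
def Dupper (μ : Measure ℝ) (q : ℝ) : ℝ :=
  limsup (fun ε : ℝ => Real.log (fracIntegral μ q ε).toReal / ((q - 1) * Real.log ε)) (𝓝[>] 0)

/-- index set of the hydrogen orbitals. -/
structure HIndex where
  n : ℕ
  l : ℕ
  m : ℤ
  hn : 1 ≤ n
  hl : l < n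
  hm : -(l : ℤ) ≤ m ∧ m ≤ (l : ℤ)

instance : Fact ((1 : ℝ≥0∞) ≤ 2) := ⟨one_le_two⟩

/-- the bound-state space -/
abbrev Hspace := lp (fun _ : HIndex => ℂ) 2

/-- eigenvalues of the hydrogen Hamiltonian -/
def lam (Λ : ℝ) (n : ℕ) : ℝ := -Λ / (n : ℝ) ^ 2

/-- spectral measure of a bound state -/
def specMeasure (Λ : ℝ) (ψ : Hspace) : Measure ℝ :=
  Measure.sum fun i : HIndex =>
    ENNReal.ofReal (‖ψ i‖ ^ 2) • Measure.dirac (lam Λ i.n)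

/-!
For a finite measure carried by a bounded interval `[a, b]` and `0 < q < 1`, the integral
`I(ε) = I_μ(q, ε)` lies between `μ(ℝ)^q` (a ball never weighs more than `ℝ`) and
`C / ε` (cut `[a, b]` into about `(b - a) / ε` intervals `J` of length `ε`; as `J ⊆ B(x, ε)` for
`x ∈ J`, each contributes at most `μ(J)^(q-1) μ(J) = μ(J)^q ≤ μ(ℝ)^q`). Hence
`log I(ε) / ((q - 1) log ε)` stays bounded as `ε → 0⁺`, `D⁺ ≥ 0`, and for `cₙ ↑ γ > 0`
  `γ ≤ D⁺  ↔  ∀ n, ε^(cₙ (q - 1)) < I(ε) for arbitrarily small ε > 0`.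
For the hydrogen atom `I(ε) = ∑ᵢ |ψᵢ|² μ_ψ(B(λᵢ, ε))^(q-1)`, and `μ_ψ(B) = ‖1_B ψ‖²` is
continuous in `ψ`, so `ψ ↦ I(ε)` is lower semicontinuous on `ℓ²` and each condition on the right
defines the Gδ set `⋂ₘ ⋃_{0 < ε < 1/m} {ψ | ε^(cₙ (q - 1)) < I(ε)}`.
-/

namespace ENNReal

lemma rpow_le_rpow_of_nonpos {x y : ℝ≥0∞} {z : ℝ} (hxy : x ≤ y) (hz : z ≤ 0) :
    y ^ z ≤ x ^ z := by
  simpa [ENNReal.rpow_neg] using ENNReal.inv_le_inv.2 (ENNReal.rpow_le_rpow hxy (neg_nonneg.2 hz))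

lemma rpow_sub_one_mul_self {x : ℝ≥0∞} {q : ℝ} (hx : x ≠ ⊤) (hq : 0 < q) :
    x ^ (q - 1) * x = x ^ q := by
  rcases eq_or_ne x 0 with rfl | hx0
  · simp [ENNReal.zero_rpow_of_pos hq]
  · conv_rhs => rw [show q = q - 1 + 1 by ring, ENNReal.rpow_add _ _ hx0 hx, ENNReal.rpow_one]

end ENNReal

theorem isGδ_setOf_frequently {X ι : Type*} [TopologicalSpace X] {l : Filter ι}
    [l.IsCountablyGenerated] {P : X → ι → Prop} (hP : ∀ᶠ i in l, IsOpen {x | P x i}) :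
    IsGδ {x | ∃ᶠ i in l, P x i} := by
  obtain ⟨s, hs⟩ := l.exists_antitone_basis
  obtain ⟨n₀, -, hn₀⟩ := hs.toHasBasis.eventually_iff.1 hP
  have : {x | ∃ᶠ i in l, P x i} = ⋂ n, ⋃ i ∈ s (n + n₀), {x | P x i} := by
    ext x
    simp only [mem_ofPred_eq, mem_iInter, mem_iUnion, exists_prop, hs.toHasBasis.frequently_iff,
      true_implies]
    exact ⟨fun h n => h _, fun h n =>
      (h n).imp fun i hi => ⟨hs.antitone (Nat.le_add_right n n₀) hi.1, hi.2⟩⟩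
  rw [this]
  exact .iInter fun n =>
    (isOpen_biUnion fun i hi => hn₀ (hs.antitone (Nat.le_add_left n₀ n) hi)).isGδ

theorem le_limsup_iff_forall_frequently_lt {α β : Type*} [ConditionallyCompleteLinearOrder β]
    [TopologicalSpace β] [OrderTopology β] {l : Filter α} {f : α → β} {γ : β} {u : ℕ → β}
    (hu : ∀ n, u n < γ) (hlim : Tendsto u atTop (𝓝 γ))
    (hcob : IsCoboundedUnder (· ≤ ·) l f) (hb : IsBoundedUnder (· ≤ ·) l f) :
    γ ≤ limsup f l ↔ ∀ n, ∃ᶠ x in l, u n < f x := by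
  rw [le_limsup_iff hcob hb]
  refine ⟨fun h n => h _ (hu n), fun h c hc => ?_⟩
  obtain ⟨n, hn⟩ := (hlim.eventually (lt_mem_nhds hc)).exists
  exact (h n).mono fun x hx => hn.trans hx

section FracIntegral

variable {μ : Measure ℝ} {q ε : ℝ}

theorem fracIntegral_le_tsum_rpow [IsFiniteMeasure μ] {κ : Type*} [Countable κ] {J : κ → Set ℝ}
    (hq0 : 0 < q) (hq1 : q ≤ 1) (hJ : ∀ k, MeasurableSet (J k))
    (hJε : ∀ k, ∀ y ∈ J k, J k ⊆ Ioo (y - ε) (y + ε)) (hcover : μ (⋃ k, J k)ᶜ = 0) :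
    fracIntegral μ q ε ≤ ∑' k, μ (J k) ^ q :=
  calc fracIntegral μ q ε ≤ ∫⁻ y, μ (Ioo (y - ε) (y + ε)) ^ (q - 1) ∂μ :=
        setLIntegral_le_lintegral _ _
    _ = ∫⁻ y in ⋃ k, J k, μ (Ioo (y - ε) (y + ε)) ^ (q - 1) ∂μ := by
        rw [Measure.restrict_eq_self_of_ae_mem (s := ⋃ k, J k) (mem_ae_iff.2 hcover)]
    _ ≤ ∑' k, ∫⁻ y in J k, μ (Ioo (y - ε) (y + ε)) ^ (q - 1) ∂μ := lintegral_iUnion_le _ _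
    _ ≤ ∑' k, ∫⁻ _ in J k, μ (J k) ^ (q - 1) ∂μ :=
        ENNReal.tsum_le_tsum fun k => setLIntegral_mono' (hJ k) fun y hy =>
          ENNReal.rpow_le_rpow_of_nonpos (measure_mono (hJε k y hy)) (by linarith)
    _ = ∑' k, μ (J k) ^ q := by
        simp_rw [setLIntegral_const, ENNReal.rpow_sub_one_mul_self (measure_ne_top _ _) hq0]

theorem fracIntegral_le_of_measure_compl_Icc [IsFiniteMeasure μ] {a b : ℝ}
    (hμ : μ (Icc a b)ᶜ = 0) (hq0 : 0 < q) (hq1 : q ≤ 1) (hε : 0 < ε) :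
    fracIntegral μ q ε ≤ (⌈(b - a) / ε⌉₊ + 1 : ℕ) * μ univ ^ q := by
  set N := ⌈(b - a) / ε⌉₊ + 1
  let J : Fin N → Set ℝ := fun k => Ico (a + k * ε) (a + (k + 1) * ε)
  have hcover : Icc a b ⊆ ⋃ k, J k := by
    intro y ⟨hay, hyb⟩
    set t := (y - a) / ε
    have hk : ⌊t⌋₊ < N := Nat.lt_succ_of_le <| (Nat.floor_le_floor <|
      div_le_div_of_nonneg_right (by linarith) hε.le).trans (Nat.floor_le_ceil _)
    have hlo : (⌊t⌋₊ : ℝ) * ε ≤ y - a :=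
      (le_div_iff₀ hε).1 (Nat.floor_le (div_nonneg (by linarith) hε.le))
    have hhi : y - a < (⌊t⌋₊ + 1) * ε := (div_lt_iff₀ hε).1 (Nat.lt_floor_add_one t)
    exact mem_iUnion.2 ⟨⟨_, hk⟩, by simp only [J, mem_Ico]; constructor <;> linarith⟩
  have hJε : ∀ k, ∀ y ∈ J k, J k ⊆ Ioo (y - ε) (y + ε) := fun k y hy z hz => by
    simp only [J, mem_Ico] at hy hz
    constructor <;> linarith [hy.1, hy.2, hz.1, hz.2]
  calc fracIntegral μ q ε ≤ ∑' k, μ (J k) ^ q :=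
        fracIntegral_le_tsum_rpow hq0 hq1 (fun _ => measurableSet_Ico) hJε
          (measure_mono_null (compl_subset_compl.2 hcover) hμ)
    _ ≤ ∑' _ : Fin N, μ univ ^ q :=
        ENNReal.tsum_le_tsum fun k => ENNReal.rpow_le_rpow (measure_mono (subset_univ _)) hq0.le
    _ = N * μ univ ^ q := by simp

theorem fracIntegral_ne_top [IsFiniteMeasure μ] {a b : ℝ} (hμ : μ (Icc a b)ᶜ = 0)
    (hq0 : 0 < q) (hq1 : q ≤ 1) (hε : 0 < ε) : fracIntegral μ q ε ≠ ⊤ :=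
  ne_top_of_le_ne_top (mul_ne_top (natCast_ne_top _)
    (rpow_ne_top_of_nonneg hq0.le (measure_ne_top _ _)))
    (fracIntegral_le_of_measure_compl_Icc hμ hq0 hq1 hε)

theorem rpow_measure_univ_le_fracIntegral [IsFiniteMeasure μ] (hq0 : 0 < q) (hq1 : q ≤ 1)
    (hε : 0 < ε) : μ univ ^ q ≤ fracIntegral μ q ε := by
  have hS : μ {x | 0 < μ (Ioo (x - ε) (x + ε))}ᶜ = 0 := by
    refine measure_mono_null (fun x (hx : x ∉ _) (hsupp : x ∈ μ.support) => hx ?_)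
      μ.measure_compl_support
    exact (μ.mem_support_iff_forall x).1 hsupp _ (Ioo_mem_nhds (by linarith) (by linarith))
  calc μ univ ^ q = ∫⁻ _ in {x | 0 < μ (Ioo (x - ε) (x + ε))}, μ univ ^ (q - 1) ∂μ := by
        rw [setLIntegral_const, measure_congr (ae_eq_univ.2 hS),
          ENNReal.rpow_sub_one_mul_self (measure_ne_top _ _) hq0]
    _ ≤ fracIntegral μ q ε := lintegral_mono fun x =>
        ENNReal.rpow_le_rpow_of_nonpos (measure_mono (subset_univ _)) (by linarith)

def fracRatio (μ : Measure ℝ) (q ε : ℝ) : ℝ :=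
  Real.log (fracIntegral μ q ε).toReal / ((q - 1) * Real.log ε)

theorem Dupper_eq_limsup_fracRatio (μ : Measure ℝ) (q : ℝ) :
    Dupper μ q = limsup (fracRatio μ q) (𝓝[>] 0) := rfl

theorem tendsto_div_mul_log_nhdsGT_zero (hq : q < 1) (c : ℝ) :
    Tendsto (fun ε => c / ((q - 1) * Real.log ε)) (𝓝[>] 0) (𝓝 0) :=
  tendsto_const_nhds.div_atTop <|
    Real.tendsto_log_nhdsGT_zero.const_mul_atBot_of_neg (by linarith)

theorem toReal_fracIntegral_le [IsFiniteMeasure μ] {a b : ℝ} (hμ : μ (Icc a b)ᶜ = 0)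
    (hab : a ≤ b) (hq0 : 0 < q) (hq1 : q ≤ 1) (hε0 : 0 < ε) (hε1 : ε ≤ 1) :
    (fracIntegral μ q ε).toReal ≤ (b - a + 2) * (μ univ).toReal ^ q / ε := by
  have hN : ((⌈(b - a) / ε⌉₊ + 1 : ℕ) : ℝ) ≤ (b - a + 2) / ε := by
    have hceil := Nat.ceil_lt_add_one (div_nonneg (sub_nonneg.2 hab) hε0.le)
    have h2 : 2 ≤ 2 / ε := by rw [le_div_iff₀ hε0]; linarith
    rw [add_div]
    push_cast
    linarith
  calc (fracIntegral μ q ε).toReal ≤ ((⌈(b - a) / ε⌉₊ + 1 : ℕ) * μ univ ^ q).toReal :=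
        ENNReal.toReal_mono (mul_ne_top (natCast_ne_top _)
          (rpow_ne_top_of_nonneg hq0.le (measure_ne_top _ _)))
          (fracIntegral_le_of_measure_compl_Icc hμ hq0 hq1 hε0)
    _ ≤ (b - a + 2) / ε * (μ univ).toReal ^ q := by
        rw [toReal_mul, toReal_natCast, ← ENNReal.toReal_rpow]
        gcongr
    _ = (b - a + 2) * (μ univ).toReal ^ q / ε := by ring

theorem eventually_fracRatio_bounds [IsFiniteMeasure μ] {a b : ℝ} (hμ : μ (Icc a b)ᶜ = 0)
    (hq0 : 0 < q) (hq1 : q < 1) : ∃ c₁ c₂ : ℝ, ∀ᶠ ε in 𝓝[>] 0,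
      c₁ / ((q - 1) * Real.log ε) ≤ fracRatio μ q ε ∧
      fracRatio μ q ε ≤ c₂ / ((q - 1) * Real.log ε) + (1 - q)⁻¹ := by
  rcases eq_or_ne μ 0 with rfl | hμ0
  · refine ⟨0, 0, .of_forall fun ε => ?_⟩
    simp [fracRatio, fracIntegral, hq1.le]
  have hab : a ≤ b := by
    by_contra h
    exact hμ0 (Measure.measure_univ_eq_zero.1 (by simpa [Icc_eq_empty h] using hμ))
  set M := (μ univ).toReal
  have hM : 0 < M := ENNReal.toReal_pos (Measure.measure_univ_ne_zero.2 hμ0) (measure_ne_top _ _)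
  refine ⟨Real.log (M ^ q), Real.log ((b - a + 2) * M ^ q), ?_⟩
  filter_upwards [Ioo_mem_nhdsGT one_pos] with ε ⟨hε0, hε1⟩
  have hlog : Real.log ε < 0 := Real.log_neg hε0 hε1
  have hD : 0 < (q - 1) * Real.log ε := mul_pos_of_neg_of_neg (by linarith) hlog
  set t := (fracIntegral μ q ε).toReal
  have hMt : M ^ q ≤ t := by
    simpa [M, ← ENNReal.toReal_rpow] using ENNReal.toReal_mono
      (fracIntegral_ne_top hμ hq0 hq1.le hε0) (rpow_measure_univ_le_fracIntegral hq0 hq1.le hε0)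
  have ht : 0 < t := (Real.rpow_pos_of_pos hM q).trans_le hMt
  constructor
  · exact div_le_div_of_nonneg_right (Real.log_le_log (by positivity) hMt) hD.le
  · calc fracRatio μ q ε ≤ Real.log ((b - a + 2) * M ^ q / ε) / ((q - 1) * Real.log ε) :=
          div_le_div_of_nonneg_right (Real.log_le_log ht
            (toReal_fracIntegral_le hμ hab hq0 hq1.le hε0 hε1.le)) hD.le
      _ = _ := by
          have hq : q - 1 ≠ 0 := by linarith
          have hq' : 1 - q ≠ 0 := by linarith
          rw [Real.log_div (by positivity) hε0.ne', sub_eq_add_neg, add_div]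
          congr 1
          field_simp [hlog.ne]
          ring

theorem isBoundedUnder_fracRatio [IsFiniteMeasure μ] {a b : ℝ} (hμ : μ (Icc a b)ᶜ = 0)
    (hq0 : 0 < q) (hq1 : q < 1) : IsBoundedUnder (· ≤ ·) (𝓝[>] 0) (fracRatio μ q) := by
  obtain ⟨_, c, h⟩ := eventually_fracRatio_bounds hμ hq0 hq1
  refine isBoundedUnder_of_eventually_le (a := 1 + (1 - q)⁻¹) ?_
  filter_upwards [h, (tendsto_div_mul_log_nhdsGT_zero hq1 c).eventually (ge_mem_nhds one_pos)]
    with ε hε hc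
  linarith [hε.2]

theorem isCoboundedUnder_fracRatio [IsFiniteMeasure μ] {a b : ℝ} (hμ : μ (Icc a b)ᶜ = 0)
    (hq0 : 0 < q) (hq1 : q < 1) : IsCoboundedUnder (· ≤ ·) (𝓝[>] 0) (fracRatio μ q) := by
  obtain ⟨c, _, h⟩ := eventually_fracRatio_bounds hμ hq0 hq1
  refine isCoboundedUnder_le_of_eventually_le _ (x := -1) ?_
  filter_upwards [h, (tendsto_div_mul_log_nhdsGT_zero hq1 c).eventually
    (lt_mem_nhds (neg_one_lt_zero))] with ε hε hc
  linarith [hε.1]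

theorem Dupper_nonneg [IsFiniteMeasure μ] {a b : ℝ} (hμ : μ (Icc a b)ᶜ = 0)
    (hq0 : 0 < q) (hq1 : q < 1) : 0 ≤ Dupper μ q := by
  obtain ⟨c, _, h⟩ := eventually_fracRatio_bounds hμ hq0 hq1
  have hc := tendsto_div_mul_log_nhdsGT_zero hq1 c
  rw [Dupper_eq_limsup_fracRatio]
  exact hc.limsup_eq.symm.le.trans <| limsup_le_limsup (h.mono fun ε hε => hε.1)
    hc.isCoboundedUnder_le (isBoundedUnder_fracRatio hμ hq0 hq1)

theorem lt_fracRatio_iff {c : ℝ} (hc : 0 ≤ c) (hq : q < 1) (hε0 : 0 < ε) (hε1 : ε < 1)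
    (hI : fracIntegral μ q ε ≠ ⊤) :
    c < fracRatio μ q ε ↔ ENNReal.ofReal (ε ^ (c * (q - 1))) < fracIntegral μ q ε := by
  have hD : 0 < (q - 1) * Real.log ε := mul_pos_of_neg_of_neg (by linarith) (Real.log_neg hε0 hε1)
  rw [fracRatio, lt_div_iff₀ hD, ENNReal.ofReal_lt_iff_lt_toReal (by positivity) hI,
    Real.rpow_def_of_pos hε0, show Real.log ε * (c * (q - 1)) = c * ((q - 1) * Real.log ε) by ring]
  rcases ENNReal.toReal_nonneg.eq_or_lt with h | h
  -- a vanishing integral gives the junk ratio `Real.log 0 / _ = 0`; `0 ≤ c` keeps both sides false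
  · rw [← h, Real.log_zero]
    simp only [(mul_nonneg hc hD.le).not_gt, (Real.exp_pos _).not_gt]
  · exact (Real.lt_log_iff_exp_lt h)

theorem le_Dupper_iff [IsFiniteMeasure μ] {a b γ : ℝ} (hμ : μ (Icc a b)ᶜ = 0) (hq0 : 0 < q)
    (hq1 : q < 1) {u : ℕ → ℝ} (hu : ∀ n, u n ∈ Ioo 0 γ) (hlim : Tendsto u atTop (𝓝 γ)) :
    γ ≤ Dupper μ q ↔
      ∀ n, ∃ᶠ ε in 𝓝[>] 0, ENNReal.ofReal (ε ^ (u n * (q - 1))) < fracIntegral μ q ε := by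
  rw [Dupper_eq_limsup_fracRatio, le_limsup_iff_forall_frequently_lt (fun n => (hu n).2) hlim
    (isCoboundedUnder_fracRatio hμ hq0 hq1) (isBoundedUnder_fracRatio hμ hq0 hq1)]
  refine forall_congr' fun n => frequently_congr ?_
  filter_upwards [Ioo_mem_nhdsGT one_pos] with ε hε
  exact lt_fracRatio_iff (hu n).1.le hq1 hε.1 hε.2 (fracIntegral_ne_top hμ hq0 hq1.le hε.1)

end FracIntegral

section AtomicMeasure

variable {ι E : Type*} [NormedAddCommGroup E]

def lpIndicator {p : ℝ≥0∞} [Fact (1 ≤ p)] (s : Set ι) (ψ : lp (fun _ : ι => E) p) :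
    lp (fun _ : ι => E) p :=
  ⟨s.indicator ψ, (lp.memℓp ψ).mono' fun i => norm_indicator_le_norm_self ψ i⟩

theorem lipschitzWith_lpIndicator {p : ℝ≥0∞} [Fact (1 ≤ p)] (s : Set ι) :
    LipschitzWith 1 (lpIndicator (E := E) (p := p) s) :=
  LipschitzWith.of_dist_le_mul fun ψ φ => by
    rw [NNReal.coe_one, one_mul, dist_eq_norm, dist_eq_norm]
    refine lp.norm_mono (zero_lt_one.trans_le Fact.out).ne' fun i => ?_
    change ‖s.indicator ψ i - s.indicator φ i‖ ≤ ‖ψ i - φ i‖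
    simpa [indicator_sub'] using norm_indicator_le_norm_self (⇑ψ - ⇑φ) i

theorem lp.summable_norm_sq (ψ : lp (fun _ : ι => E) 2) : Summable fun i => ‖ψ i‖ ^ 2 := by
  simpa using (lp.memℓp ψ).summable (p := 2) (by norm_num)

theorem lp.norm_sq_eq_tsum (ψ : lp (fun _ : ι => E) 2) : ‖ψ‖ ^ 2 = ∑' i, ‖ψ i‖ ^ 2 := by
  simpa using lp.norm_rpow_eq_tsum (p := 2) (by norm_num) ψ

def atomicMeasure (x : ι → ℝ) (ψ : lp (fun _ : ι => E) 2) : Measure ℝ :=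
  Measure.sum fun i => ENNReal.ofReal (‖ψ i‖ ^ 2) • Measure.dirac (x i)

variable {x : ι → ℝ}

theorem atomicMeasure_apply (ψ : lp (fun _ : ι => E) 2) {S : Set ℝ} (hS : MeasurableSet S) :
    atomicMeasure x ψ S = ENNReal.ofReal (‖lpIndicator (x ⁻¹' S) ψ‖ ^ 2) := by
  rw [lp.norm_sq_eq_tsum, ENNReal.ofReal_tsum_of_nonneg (fun _ => by positivity)
    (lp.summable_norm_sq _), atomicMeasure, Measure.sum_apply _ hS]
  refine tsum_congr fun i => ?_
  by_cases h : x i ∈ S <;> simp [h, lpIndicator, Measure.dirac_apply' _ hS]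

instance (ψ : lp (fun _ : ι => E) 2) : IsFiniteMeasure (atomicMeasure x ψ) :=
  ⟨by rw [atomicMeasure_apply ψ MeasurableSet.univ]; exact ofReal_lt_top⟩

theorem continuous_atomicMeasure_apply {S : Set ℝ} (hS : MeasurableSet S) :
    Continuous fun ψ : lp (fun _ : ι => E) 2 => atomicMeasure x ψ S := by
  simp_rw [atomicMeasure_apply _ hS]
  exact ENNReal.continuous_ofReal.comp ((lipschitzWith_lpIndicator _).continuous.norm.pow 2)

theorem atomicMeasure_compl_eq_zero (ψ : lp (fun _ : ι => E) 2) {S : Set ℝ}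
    (hS : MeasurableSet S) (hx : ∀ i, x i ∈ S) : atomicMeasure x ψ Sᶜ = 0 := by
  simp [atomicMeasure, Measure.sum_apply _ hS.compl, hx]

theorem ofReal_norm_sq_le_atomicMeasure (ψ : lp (fun _ : ι => E) 2) {i : ι} {S : Set ℝ}
    (h : x i ∈ S) : ENNReal.ofReal (‖ψ i‖ ^ 2) ≤ atomicMeasure x ψ S :=
  calc ENNReal.ofReal (‖ψ i‖ ^ 2)
      = (ENNReal.ofReal (‖ψ i‖ ^ 2) • Measure.dirac (x i)) S := by
        simp [Measure.dirac_apply_of_mem h]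
    _ ≤ atomicMeasure x ψ S := Measure.le_sum _ i S

theorem fracIntegral_atomicMeasure [Countable ι] (ψ : lp (fun _ : ι => E) 2) (q : ℝ) {ε : ℝ}
    (hε : 0 < ε) : fracIntegral (atomicMeasure x ψ) q ε =
      ∑' i, ENNReal.ofReal (‖ψ i‖ ^ 2) * atomicMeasure x ψ (Ioo (x i - ε) (x i + ε)) ^ (q - 1) := by
  classical
  set μ := atomicMeasure x ψ
  set S := {y : ℝ | 0 < μ (Ioo (y - ε) (y + ε))}
  have hrestrict : μ.restrict S =
      Measure.sum fun i => ENNReal.ofReal (‖ψ i‖ ^ 2) • (Measure.dirac (x i)).restrict S := by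
    simp only [μ, atomicMeasure, Measure.restrict_sum_of_countable, Measure.restrict_smul]
  rw [fracIntegral, hrestrict, lintegral_sum_measure]
  refine tsum_congr fun i => ?_
  rw [lintegral_smul_measure, restrict_dirac]
  split_ifs with hi
  · rw [lintegral_dirac, smul_eq_mul]
  · have hball : μ (Ioo (x i - ε) (x i + ε)) = 0 := le_zero_iff.1 (not_lt.1 hi)
    have hw := ofReal_norm_sq_le_atomicMeasure (x := x) ψ
      (show x i ∈ Ioo (x i - ε) (x i + ε) from ⟨by linarith, by linarith⟩)
    simp [nonpos_iff_eq_zero.1 (hw.trans_eq hball)]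

theorem lowerSemicontinuous_fracIntegral_atomicMeasure [Countable ι] (x : ι → ℝ) (q : ℝ)
    {ε : ℝ} (hε : 0 < ε) :
    LowerSemicontinuous fun ψ : lp (fun _ : ι => E) 2 => fracIntegral (atomicMeasure x ψ) q ε := by
  simp_rw [fracIntegral_atomicMeasure _ q hε]
  refine lowerSemicontinuous_tsum fun i ψ₀ => ?_
  rcases eq_or_ne (ψ₀ i) 0 with h | h
  · intro y hy
    simp [h] at hy
  -- `ψ₀ i ≠ 0` excludes the indeterminate product `0 * ⊤` at `ψ₀`
  · have hcoord : Continuous fun ψ : lp (fun _ : ι => E) 2 => ENNReal.ofReal (‖ψ i‖ ^ 2) :=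
      ENNReal.continuous_ofReal.comp
        (((continuous_apply i).comp lp.uniformContinuous_coe.continuous).norm.pow 2)
    refine ContinuousAt.lowerSemicontinuousAt <| ENNReal.Tendsto.mul hcoord.continuousAt
      (Or.inl (by simpa using h)) ?_ (Or.inr ofReal_ne_top)
    exact (ENNReal.continuous_rpow_const.comp
      (continuous_atomicMeasure_apply measurableSet_Ioo)).continuousAt

end AtomicMeasure

instance : Countable HIndex :=
  Function.Injective.countable (f := fun i : HIndex => (i.n, i.l, i.m))
    fun ⟨_, _, _, _, _, _⟩ ⟨_, _, _, _, _, _⟩ h => by simp_all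

theorem specMeasure_eq_atomicMeasure (Λ : ℝ) (ψ : Hspace) :
    specMeasure Λ ψ = atomicMeasure (fun i => lam Λ i.n) ψ := rfl

instance (Λ : ℝ) (ψ : Hspace) : IsFiniteMeasure (specMeasure Λ ψ) := by
  rw [specMeasure_eq_atomicMeasure]; infer_instance

theorem lam_mem_Icc {Λ : ℝ} (hΛ : 0 ≤ Λ) {n : ℕ} (hn : 1 ≤ n) : lam Λ n ∈ Icc (-Λ) 0 := by
  have hn2 : (1 : ℝ) ≤ (n : ℝ) ^ 2 := one_le_pow₀ (by exact_mod_cast hn)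
  rw [lam, neg_div]
  exact ⟨neg_le_neg (div_le_self hΛ hn2), neg_nonpos.2 (by positivity)⟩

theorem specMeasure_compl_Icc {Λ : ℝ} (hΛ : 0 ≤ Λ) (ψ : Hspace) :
    specMeasure Λ ψ (Icc (-Λ) 0)ᶜ = 0 :=
  atomicMeasure_compl_eq_zero ψ measurableSet_Icc fun i => lam_mem_Icc hΛ i.hn

theorem hydrogen_Gdelta_upper (Λ : ℝ) (hΛ : 0 < Λ)
    (q : ℝ) (hq : q ∈ Ioo (0 : ℝ) 1) (γ : ℝ) (hγ : γ ∈ Icc (0 : ℝ) 1) :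
    IsGδ {ψ : Hspace | γ ≤ Dupper (specMeasure Λ ψ) q} := by
  obtain ⟨hq0, hq1⟩ := hq
  have hsupp := specMeasure_compl_Icc hΛ.le
  rcases hγ.1.eq_or_lt with rfl | hγ0
  · simp only [Dupper_nonneg (hsupp _) hq0 hq1, ofPred_true]
    exact .univ
  obtain ⟨u, -, hu, hlim⟩ := exists_seq_strictMono_tendsto' hγ0
  simp_rw [le_Dupper_iff (hsupp _) hq0 hq1 hu hlim, ofPred_forall]
  refine .iInter fun n => isGδ_setOf_frequently ?_
  filter_upwards [self_mem_nhdsWithin] with ε hε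
  exact (lowerSemicontinuous_fracIntegral_atomicMeasure _ q hε).isOpen_preimage _
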